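/- There exists a finite constant C such that for every α > 0 and all Lebesgue measurable sets E, F ⊂ ℂ², ∫_{ℂ²} ∫_{ℂ²} χ_{{|z₁w₂ − z₂w₁|² ≤ α}}(z,w) · χ_E(z) χ_F(w) dz dw ≤ C α |E|^{1/2} |F|^{1/2}. -/

import Mathlib

open MeasureTheory Set Real Metric
open scoped ENNReal NNReal

/-! For `z ≠ 0`, Fubini in the coordinate where `z` is largest (`ℂ × ℂ` carries the sup norm)
shows that `{w | |det(z, w)| ≤ ε, ‖w‖ ≤ R}` has measure at most `π² ε² R² / ‖z‖²`: a disc of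
radius `R` times a disc of radius `ε / ‖z‖`. Splitting the pairs `(z, w)` according to whether
`‖w‖ ≤ t ‖z‖` or `‖z‖ ≤ t⁻¹ ‖w‖` and integrating this bound in the larger variable gives
`π² ε² (t² |E| + t⁻² |F|)`, and the optimal `t` turns this into `2 π² ε² |E|^{1/2} |F|^{1/2}`,
where `ε² = α`. -/

def cdet (z w : ℂ × ℂ) : ℂ := z.1 * w.2 - z.2 * w.1

lemma norm_cdet_comm (z w : ℂ × ℂ) : ‖cdet w z‖ = ‖cdet z w‖ := by
  rw [cdet, cdet, ← norm_neg]
  ring_nf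

lemma Complex.volume_closedBall_eq_ofReal (a : ℂ) {r : ℝ} (hr : 0 ≤ r) :
    volume (closedBall a r) = ENNReal.ofReal (π * r ^ 2) := by
  rw [Complex.volume_closedBall, ← ENNReal.ofReal_pow hr, ← ENNReal.ofReal_coe_nnreal,
    NNReal.coe_real_pi, ← ENNReal.ofReal_mul (by positivity), mul_comm]

lemma volume_setOf_norm_fst_le_and_norm_mul_add_mul_le (p : ℂ) {q : ℂ} (hq : q ≠ 0) {ε R : ℝ}
    (hε : 0 ≤ ε) (hR : 0 ≤ R) :
    volume {v : ℂ × ℂ | ‖v.1‖ ≤ R ∧ ‖p * v.1 + q * v.2‖ ≤ ε}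
      ≤ ENNReal.ofReal (π * R ^ 2) * ENNReal.ofReal (π * (ε / ‖q‖) ^ 2) := by
  have hmeas : MeasurableSet {v : ℂ × ℂ | ‖v.1‖ ≤ R ∧ ‖p * v.1 + q * v.2‖ ≤ ε} := by
    measurability
  have hslice : ∀ x : ℂ, volume {y : ℂ | ‖x‖ ≤ R ∧ ‖p * x + q * y‖ ≤ ε}
      ≤ (closedBall (0 : ℂ) R).indicator (fun _ => ENNReal.ofReal (π * (ε / ‖q‖) ^ 2)) x := by
    intro x
    by_cases hx : ‖x‖ ≤ R
    · rw [indicator_of_mem (mem_closedBall_zero_iff.2 hx),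
        ← Complex.volume_closedBall_eq_ofReal (-(p * x) / q) (by positivity)]
      refine measure_mono fun y hy => ?_
      have hy' : (y - -(p * x) / q) * q = p * x + q * y := by
        rw [sub_mul, div_mul_cancel₀ _ hq]
        ring
      rw [mem_closedBall, dist_eq_norm, le_div_iff₀ (norm_pos_iff.2 hq), ← norm_mul, hy']
      exact hy.2
    · simp [hx]
  rw [Measure.volume_eq_prod, Measure.prod_apply hmeas, mul_comm,
    ← Complex.volume_closedBall_eq_ofReal 0 hR,
    ← lintegral_indicator_const measurableSet_closedBall]
  exact lintegral_mono hslice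

lemma volume_setOf_norm_cdet_le_and_norm_le (z : ℂ × ℂ) {ε t : ℝ} (hε : 0 ≤ ε) (ht : 0 ≤ t) :
    volume {w | ‖cdet z w‖ ≤ ε ∧ ‖w‖ ≤ t * ‖z‖} ≤ ENNReal.ofReal (π ^ 2 * ε ^ 2 * t ^ 2) := by
  rcases eq_or_ne z 0 with rfl | hz
  · refine (measure_mono (t := {0} ×ˢ {0}) fun w hw => ?_).trans ?_
    · simpa [Prod.ext_iff] using hw.2
    · simp [Measure.volume_eq_prod]
  have hz' : 0 < ‖z‖ := norm_pos_iff.2 hz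
  suffices h : volume {w | ‖cdet z w‖ ≤ ε ∧ ‖w‖ ≤ t * ‖z‖}
      ≤ ENNReal.ofReal (π * (t * ‖z‖) ^ 2) * ENNReal.ofReal (π * (ε / ‖z‖) ^ 2) by
    refine h.trans_eq ?_
    rw [← ENNReal.ofReal_mul (by positivity)]
    congr 1
    field_simp
  have hR : 0 ≤ t * ‖z‖ := by positivity
  rcases le_total ‖z.2‖ ‖z.1‖ with h | h
  · have hnorm : ‖z.1‖ = ‖z‖ := by rw [Prod.norm_def, max_eq_left h]
    have h1 : z.1 ≠ 0 := norm_pos_iff.1 (hnorm ▸ hz')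
    rw [← hnorm]
    refine (measure_mono fun w hw => ?_).trans
      (volume_setOf_norm_fst_le_and_norm_mul_add_mul_le (-z.2) h1 hε (hnorm ▸ hR))
    refine ⟨(norm_fst_le w).trans (hnorm ▸ hw.2), ?_⟩
    convert hw.1 using 2
    rw [cdet]; ring
  · have hnorm : ‖-z.2‖ = ‖z‖ := by rw [norm_neg, Prod.norm_def, max_eq_right h]
    have h2 : -z.2 ≠ 0 := norm_pos_iff.1 (hnorm ▸ hz')
    rw [← hnorm]
    calc volume {w | ‖cdet z w‖ ≤ ε ∧ ‖w‖ ≤ t * ‖-z.2‖}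
        ≤ volume (Prod.swap ⁻¹'
            {v : ℂ × ℂ | ‖v.1‖ ≤ t * ‖-z.2‖ ∧ ‖z.1 * v.1 + -z.2 * v.2‖ ≤ ε}) := by
          refine measure_mono fun w hw => ⟨(norm_snd_le w).trans hw.2, ?_⟩
          convert hw.1 using 2
          simp only [Prod.fst_swap, Prod.snd_swap, cdet]; ring
      _ ≤ _ := by
          change volume (MeasurableEquiv.prodComm ⁻¹' _) ≤ _
          rw [Measure.volume_eq_prod, (Measure.measurePreserving_swap : MeasurePreserving
            MeasurableEquiv.prodComm _ _).measure_preimage_equiv, ← Measure.volume_eq_prod]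
          exact volume_setOf_norm_fst_le_and_norm_mul_add_mul_le z.1 h2 hε (hnorm ▸ hR)


section SliceBounds

variable {α β : Type*} [MeasurableSpace α] [MeasurableSpace β] {μ : Measure α} {ν : Measure β}
  {T : Set (α × β)} {c : ℝ≥0∞}

lemma MeasureTheory.Measure.prod_inter_prod_univ_le [SFinite ν] (hT : MeasurableSet T)
    {E : Set α} (hE : MeasurableSet E) (h : ∀ x ∈ E, ν (Prod.mk x ⁻¹' T) ≤ c) :
    μ.prod ν (T ∩ E ×ˢ univ) ≤ c * μ E := by
  rw [Measure.prod_apply (hT.inter (hE.prod .univ)), ← lintegral_indicator_const hE]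
  refine lintegral_mono fun x => ?_
  by_cases hx : x ∈ E
  · simpa [hx] using h x hx
  · simp [hx]

lemma MeasureTheory.Measure.prod_inter_univ_prod_le [SFinite μ] [SFinite ν]
    (hT : MeasurableSet T) {F : Set β} (hF : MeasurableSet F) (h : ∀ y ∈ F, μ ((·, y) ⁻¹' T) ≤ c) :
    μ.prod ν (T ∩ univ ×ˢ F) ≤ c * ν F := by
  rw [Measure.prod_apply_symm (hT.inter (MeasurableSet.univ.prod hF)),
    ← lintegral_indicator_const hF]
  refine lintegral_mono fun y => ?_
  by_cases hy : y ∈ F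
  · simpa [hy] using h y hy
  · simp [hy]

end SliceBounds

lemma volume_setOf_norm_cdet_le_inter_prod_le_add {E F : Set (ℂ × ℂ)} (hE : MeasurableSet E)
    (hF : MeasurableSet F) {ε t : ℝ} (hε : 0 ≤ ε) (ht : 0 < t) :
    volume ({q : (ℂ × ℂ) × (ℂ × ℂ) | ‖cdet q.1 q.2‖ ≤ ε} ∩ E ×ˢ F)
      ≤ ENNReal.ofReal (π ^ 2 * ε ^ 2 * t ^ 2) * volume E
        + ENNReal.ofReal (π ^ 2 * ε ^ 2 * t⁻¹ ^ 2) * volume F := by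
  set T₁ := {q : (ℂ × ℂ) × (ℂ × ℂ) | ‖cdet q.1 q.2‖ ≤ ε ∧ ‖q.2‖ ≤ t * ‖q.1‖}
  set T₂ := {q : (ℂ × ℂ) × (ℂ × ℂ) | ‖cdet q.2 q.1‖ ≤ ε ∧ ‖q.1‖ ≤ t⁻¹ * ‖q.2‖}
  have hT₁ : MeasurableSet T₁ := by unfold T₁ cdet; measurability
  have hT₂ : MeasurableSet T₂ := by unfold T₂ cdet; measurability
  have hcover : {q : (ℂ × ℂ) × (ℂ × ℂ) | ‖cdet q.1 q.2‖ ≤ ε} ∩ E ×ˢ F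
      ⊆ T₁ ∩ E ×ˢ univ ∪ T₂ ∩ univ ×ˢ F := by
    rintro ⟨z, w⟩ ⟨hdet, hz, hw⟩
    rcases le_or_gt ‖w‖ (t * ‖z‖) with h | h
    · exact Or.inl ⟨⟨hdet, h⟩, hz, trivial⟩
    · refine Or.inr ⟨⟨(norm_cdet_comm z w).trans_le hdet, ?_⟩, trivial, hw⟩
      rw [inv_mul_eq_div, le_div_iff₀' ht]
      exact h.le
  calc _ ≤ volume (T₁ ∩ E ×ˢ univ ∪ T₂ ∩ univ ×ˢ F) := measure_mono hcover
    _ ≤ volume (T₁ ∩ E ×ˢ univ) + volume (T₂ ∩ univ ×ˢ F) := measure_union_le _ _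
    _ ≤ _ := by
      rw [Measure.volume_eq_prod]
      gcongr
      · exact Measure.prod_inter_prod_univ_le hT₁ hE fun z _ =>
          volume_setOf_norm_cdet_le_and_norm_le z hε ht.le
      · exact Measure.prod_inter_univ_prod_le hT₂ hF fun w _ =>
          volume_setOf_norm_cdet_le_and_norm_le w hε (inv_nonneg.2 ht.le)

lemma exists_sq_mul_eq_and_inv_sq_mul_eq {a b : ℝ} (ha : 0 < a) (hb : 0 < b) :
    ∃ t > 0, t ^ 2 * a = √a * √b ∧ t⁻¹ ^ 2 * b = √a * √b := by
  refine ⟨√(√b / √a), Real.sqrt_pos.2 (by positivity), ?_⟩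
  rw [inv_pow, Real.sq_sqrt (by positivity)]
  constructor <;> field_simp <;> simp [Real.sq_sqrt, ha.le, hb.le]

lemma ENNReal.le_two_mul_rpow_mul_rpow_of_forall {X A B : ℝ≥0∞} {c : ℝ} (hc : 0 ≤ c)
    (hA₀ : A ≠ 0) (hA : A ≠ ⊤) (hB₀ : B ≠ 0) (hB : B ≠ ⊤)
    (h : ∀ t : ℝ, 0 < t →
      X ≤ ENNReal.ofReal (c * t ^ 2) * A + ENNReal.ofReal (c * t⁻¹ ^ 2) * B) :
    X ≤ ENNReal.ofReal (2 * c) * A ^ (1 / 2 : ℝ) * B ^ (1 / 2 : ℝ) := by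
  obtain ⟨t, ht, hEt, hFt⟩ := exists_sq_mul_eq_and_inv_sq_mul_eq
    (ENNReal.toReal_pos hA₀ hA) (ENNReal.toReal_pos hB₀ hB)
  refine (h t ht).trans_eq ?_
  rw [← ENNReal.ofReal_toReal hA, ← ENNReal.ofReal_toReal hB,
    ENNReal.ofReal_rpow_of_nonneg ENNReal.toReal_nonneg (by norm_num),
    ENNReal.ofReal_rpow_of_nonneg ENNReal.toReal_nonneg (by norm_num),
    ← Real.sqrt_eq_rpow, ← Real.sqrt_eq_rpow, ← ENNReal.ofReal_mul (by positivity),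
    ← ENNReal.ofReal_mul (by positivity), ← ENNReal.ofReal_mul (by positivity),
    ← ENNReal.ofReal_mul (by positivity), ← ENNReal.ofReal_add (by positivity) (by positivity),
    mul_assoc, hEt, mul_assoc, hFt]
  ring_nf

lemma volume_setOf_norm_cdet_le_inter_prod_le {E F : Set (ℂ × ℂ)} (hE : MeasurableSet E)
    (hF : MeasurableSet F) {ε : ℝ} (hε : 0 < ε) :
    volume ({q : (ℂ × ℂ) × (ℂ × ℂ) | ‖cdet q.1 q.2‖ ≤ ε} ∩ E ×ˢ F)
      ≤ ENNReal.ofReal (2 * (π ^ 2 * ε ^ 2)) * volume E ^ (1 / 2 : ℝ)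
        * volume F ^ (1 / 2 : ℝ) := by
  set P := {q : (ℂ × ℂ) × (ℂ × ℂ) | ‖cdet q.1 q.2‖ ≤ ε} ∩ E ×ˢ F
  have hPE : volume P ≤ volume E * volume (univ : Set (ℂ × ℂ)) := by
    rw [Measure.volume_eq_prod, ← Measure.prod_prod]
    exact measure_mono fun q hq => ⟨hq.2.1, trivial⟩
  have hPF : volume P ≤ volume (univ : Set (ℂ × ℂ)) * volume F := by
    rw [Measure.volume_eq_prod, ← Measure.prod_prod]
    exact measure_mono fun q hq => ⟨trivial, hq.2.2⟩
  rcases eq_or_ne (volume E) 0 with hE₀ | hE₀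
  · simpa [hE₀] using hPE
  rcases eq_or_ne (volume F) 0 with hF₀ | hF₀
  · simpa [hF₀] using hPF
  have hc : ENNReal.ofReal (2 * (π ^ 2 * ε ^ 2)) ≠ 0 := by
    rw [ne_eq, ENNReal.ofReal_eq_zero, not_le]; positivity
  have hrpow : ∀ {x : ℝ≥0∞}, x ≠ 0 → x ^ (1 / 2 : ℝ) ≠ 0 := fun hx => by
    simp [ENNReal.rpow_eq_zero_iff, hx]
  rcases eq_or_ne (volume E) ⊤ with hE₁ | hE₁
  · rw [hE₁, ENNReal.top_rpow_of_pos (by norm_num), ENNReal.mul_top hc,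
      ENNReal.top_mul (hrpow hF₀)]
    exact le_top
  rcases eq_or_ne (volume F) ⊤ with hF₁ | hF₁
  · rw [hF₁, ENNReal.top_rpow_of_pos (by norm_num), ENNReal.mul_top (mul_ne_zero hc (hrpow hE₀))]
    exact le_top
  refine ENNReal.le_two_mul_rpow_mul_rpow_of_forall (by positivity) hE₀ hE₁ hF₀ hF₁ fun t ht => ?_
  simpa only [mul_assoc] using volume_setOf_norm_cdet_le_inter_prod_le_add hE hF hε.le ht

lemma lintegral_lintegral_indicator_mul_indicator_mul_indicator {α β : Type*}
    [MeasurableSpace α] [MeasurableSpace β] {μ : Measure α} {ν : Measure β} [SFinite ν]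
    {S : Set (α × β)} {E : Set α} {F : Set β} (hS : MeasurableSet S) (hE : MeasurableSet E)
    (hF : MeasurableSet F) :
    ∫⁻ x, ∫⁻ y, S.indicator (fun _ => (1 : ℝ≥0∞)) (x, y) * E.indicator (fun _ => 1) x
        * F.indicator (fun _ => 1) y ∂ν ∂μ = μ.prod ν (S ∩ E ×ˢ F) := by
  have hSEF := hS.inter (hE.prod hF)
  have hpt : ∀ x y, S.indicator (fun _ => (1 : ℝ≥0∞)) (x, y) * E.indicator (fun _ => 1) x
      * F.indicator (fun _ => 1) y = (S ∩ E ×ˢ F).indicator 1 (x, y) := by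
    intro x y
    by_cases hS : (x, y) ∈ S <;> by_cases hE : x ∈ E <;> by_cases hF : y ∈ F <;> simp [*]
  simp_rw [hpt]
  rw [← lintegral_prod _ ((measurable_one.indicator hSEF).aemeasurable),
    lintegral_indicator_one hSEF]

theorem statement19 :
    ∃ C : ℝ, 0 ≤ C ∧ ∀ α : ℝ, 0 < α →
      ∀ E F : Set (ℂ × ℂ), MeasurableSet E → MeasurableSet F →
      (∫⁻ z, ∫⁻ w,
          ({q : (ℂ × ℂ) × (ℂ × ℂ) |
              ‖q.1.1 * q.2.2 - q.1.2 * q.2.1‖ ^ 2 ≤ α}.indicator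
                (fun _ => (1 : ℝ≥0∞)) (z, w))
            * E.indicator (fun _ => (1 : ℝ≥0∞)) z * F.indicator (fun _ => (1 : ℝ≥0∞)) w)
        ≤ ENNReal.ofReal (C * α) * (volume E) ^ (1/2 : ℝ) * (volume F) ^ (1/2 : ℝ) := by
  refine ⟨2 * π ^ 2, by positivity, fun α hα E F hE hF => ?_⟩
  have hS : {q : (ℂ × ℂ) × (ℂ × ℂ) | ‖q.1.1 * q.2.2 - q.1.2 * q.2.1‖ ^ 2 ≤ α}
      = {q | ‖cdet q.1 q.2‖ ≤ √α} := by
    ext q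
    rw [mem_ofPred_eq, mem_ofPred_eq, Real.le_sqrt (norm_nonneg _) hα.le, cdet]
  have hSmeas : MeasurableSet {q : (ℂ × ℂ) × (ℂ × ℂ) | ‖cdet q.1 q.2‖ ≤ √α} := by
    unfold cdet; measurability
  rw [hS, lintegral_lintegral_indicator_mul_indicator_mul_indicator hSmeas hE hF,
    ← Measure.volume_eq_prod]
  convert volume_setOf_norm_cdet_le_inter_prod_le hE hF (Real.sqrt_pos.2 hα) using 3
  rw [Real.sq_sqrt hα.le, mul_assoc]
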